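/- Let X be a Banach space with type p ∈ [1,2] and cotype q ∈ [2,∞], with 1/p − 1/q < 1. Let (T(t))_{t≥0} be a strongly continuous semigroup on X satisfying ‖T(t)‖ ≤ M e^{−ωt} for all t ≥ 0, for some M ≥ 1 and ω > 0. Let Z be a Banach space, ι : Z → X a bounded linear operator, and α ∈ (1/p − 1/q, 1) such that K := sup_{t>0} t^{−α} ‖T(t)∘ι − ι‖_{B(Z,X)} < ∞. Then the family {T(t)∘ι : t ∈ [0,∞)} ⊆ B(Z,X) is R-bounded. -/

import Mathlib

open MeasureTheory ENNReal

noncomputable section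

/-- The Rademacher average `𝔼 ‖∑ₙ rₙ xₙ‖²`, realized concretely as the average over all
sign choices `ε : Fin N → Bool`.  For a Rademacher sequence `(rₙ)` on any probability space
this equals `𝔼 ‖∑ₙ rₙ xₙ‖²`. -/
def radAvg {E : Type*} [NormedAddCommGroup E] [NormedSpace ℝ E] {N : ℕ} (x : Fin N → E) : ℝ :=
  (∑ ε : Fin N → Bool, ‖∑ n, (if ε n then (1 : ℝ) else -1) • x n‖ ^ 2) / 2 ^ N

/-- `X` has (Rademacher) type `p`:
`(𝔼 ‖∑ rₙ xₙ‖²)^(1/2) ≤ C (∑ ‖xₙ‖^p)^(1/p)`. -/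
def HasRademacherType (X : Type*) [NormedAddCommGroup X] [NormedSpace ℝ X] (p : ℝ) : Prop :=
  ∃ C : ℝ, 0 ≤ C ∧ ∀ (N : ℕ) (x : Fin N → X),
    Real.sqrt (radAvg x) ≤ C * (∑ n, ‖x n‖ ^ p) ^ (1 / p)

/-- `X` has (Rademacher) cotype `q ∈ [2,∞]`:
`(∑ ‖xₙ‖^q)^(1/q) ≤ C (𝔼 ‖∑ rₙ xₙ‖²)^(1/2)` (with `max ‖xₙ‖` on the left if `q = ∞`). -/
def HasRademacherCotype (X : Type*) [NormedAddCommGroup X] [NormedSpace ℝ X] (q : ℝ≥0∞) : Prop :=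
  ∃ C : ℝ, 0 ≤ C ∧ ∀ (N : ℕ) (x : Fin N → X),
    (if q = ∞ then ⨆ n, ‖x n‖ else (∑ n, ‖x n‖ ^ q.toReal) ^ (1 / q.toReal))
      ≤ C * Real.sqrt (radAvg x)

namespace RadAux

def sgn (b : Bool) : ℝ := if b then 1 else -1

variable {E F : Type*} [NormedAddCommGroup E] [NormedSpace ℝ E]
  [NormedAddCommGroup F] [NormedSpace ℝ F] {N m : ℕ}

lemma abs_sgn (b : Bool) : |sgn b| = 1 := by cases b <;> simp [sgn]

lemma sgn_mul_sgn (a b : Bool) : sgn a * sgn b = sgn (a == b) := by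
  cases a <;> cases b <;> norm_num [sgn]

lemma radAvg_eq (x : Fin N → E) :
    radAvg x = (∑ ε : Fin N → Bool, ‖∑ n, sgn (ε n) • x n‖ ^ 2) / 2 ^ N := rfl

lemma radAvg_nonneg (x : Fin N → E) : 0 ≤ radAvg x := by
  apply div_nonneg _ (by positivity)
  exact Finset.sum_nonneg fun ε _ => by positivity

lemma radAvg_zero : radAvg (fun _ : Fin N => (0 : E)) = 0 := by
  simp [radAvg_eq]

/-- core flip identity at the level of raw sums -/
lemma sum_flip (η : Fin N → Bool) (x : Fin N → E) :
    ∑ ε : Fin N → Bool, ‖∑ n, (sgn (ε n) * sgn (η n)) • x n‖ ^ 2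
      = ∑ ε : Fin N → Bool, ‖∑ n, sgn (ε n) • x n‖ ^ 2 := by
  have hinv : Function.Involutive (fun (ε : Fin N → Bool) => fun n => (ε n == η n)) := by
    intro ε; funext n; simp only []; cases h1 : ε n <;> cases h2 : η n <;> simp [h1, h2]
  refine Fintype.sum_bijective _ hinv.bijective _ _ ?_
  intro ε
  congr 1
  refine congrArg _ (Finset.sum_congr rfl fun n _ => ?_)
  rw [sgn_mul_sgn]

lemma radAvg_flip (η : Fin N → Bool) (x : Fin N → E) :
    radAvg (fun n => sgn (η n) • x n) = radAvg x := by
  rw [radAvg_eq, radAvg_eq]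
  congr 1
  rw [← sum_flip η x]
  refine Finset.sum_congr rfl fun ε _ => ?_
  congr 1
  refine congrArg _ (Finset.sum_congr rfl fun n _ => ?_)
  rw [smul_smul]

end RadAux

namespace RadAux2
open RadAux

variable {E F : Type*} [NormedAddCommGroup E] [NormedSpace ℝ E]
  [NormedAddCommGroup F] [NormedSpace ℝ F] {N m : ℕ}

/-- scalar ℓ² triangle inequality -/
lemma sqrt_sum_sq_add {ι : Type*} [Fintype ι] (a b : ι → ℝ) :
    Real.sqrt (∑ i, (a i + b i) ^ 2) ≤ Real.sqrt (∑ i, a i ^ 2) + Real.sqrt (∑ i, b i ^ 2) := by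
  classical
  let u : EuclideanSpace ℝ ι := WithLp.toLp 2 a
  let v : EuclideanSpace ℝ ι := WithLp.toLp 2 b
  have hn : ∀ w : EuclideanSpace ℝ ι, ‖w‖ = Real.sqrt (∑ i, w i ^ 2) := by
    intro w
    rw [EuclideanSpace.norm_eq]
    congr 1
    exact Finset.sum_congr rfl fun i _ => by rw [Real.norm_eq_abs, sq_abs]
  have := norm_add_le u v
  rw [hn, hn, hn] at this
  simpa using this

lemma sqrt_radAvg_add (x y : Fin N → E) :
    Real.sqrt (radAvg (fun n => x n + y n)) ≤ Real.sqrt (radAvg x) + Real.sqrt (radAvg y) := by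
  rw [radAvg_eq, radAvg_eq, radAvg_eq]
  have h2 : (0:ℝ) ≤ 2 ^ N := by positivity
  rw [Real.sqrt_div' _ h2, Real.sqrt_div' _ h2, Real.sqrt_div' _ h2, ← add_div]
  apply div_le_div_of_nonneg_right ?_ ?_ |>.trans_eq rfl
  · calc Real.sqrt (∑ ε : Fin N → Bool, ‖∑ n, sgn (ε n) • (x n + y n)‖ ^ 2)
        ≤ Real.sqrt (∑ ε : Fin N → Bool,
            (‖∑ n, sgn (ε n) • x n‖ + ‖∑ n, sgn (ε n) • y n‖) ^ 2) := by
          apply Real.sqrt_le_sqrt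
          apply Finset.sum_le_sum
          intro ε _
          have hle : ‖∑ n, sgn (ε n) • (x n + y n)‖
              ≤ ‖∑ n, sgn (ε n) • x n‖ + ‖∑ n, sgn (ε n) • y n‖ := by
            calc ‖∑ n, sgn (ε n) • (x n + y n)‖
                = ‖(∑ n, sgn (ε n) • x n) + ∑ n, sgn (ε n) • y n‖ := by
                  rw [← Finset.sum_add_distrib]
                  congr 1
                  exact Finset.sum_congr rfl fun n _ => smul_add _ _ _
              _ ≤ _ := norm_add_le _ _
          exact pow_le_pow_left₀ (norm_nonneg _) hle 2
      _ ≤ _ := sqrt_sum_sq_add _ _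
  · positivity

lemma sqrt_radAvg_sum {ι : Type*} (s : Finset ι) (f : ι → Fin N → E) :
    Real.sqrt (radAvg (fun n => ∑ i ∈ s, f i n)) ≤ ∑ i ∈ s, Real.sqrt (radAvg (f i)) := by
  classical
  induction s using Finset.induction with
  | empty => simp [radAvg_zero]
  | @insert a s' hx ih =>
    rw [Finset.sum_insert hx]
    calc Real.sqrt (radAvg fun n => ∑ i ∈ insert a s', f i n)
        = Real.sqrt (radAvg fun n => f a n + ∑ i ∈ s', f i n) := by
          congr 1; apply congrArg; funext n; rw [Finset.sum_insert hx]
      _ ≤ Real.sqrt (radAvg (f a)) + Real.sqrt (radAvg fun n => ∑ i ∈ s', f i n) :=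
          sqrt_radAvg_add _ _
      _ ≤ _ := by exact add_le_add (le_refl _) ih

lemma radAvg_map_le (B : E →L[ℝ] F) (x : Fin N → E) :
    radAvg (fun n => B (x n)) ≤ ‖B‖ ^ 2 * radAvg x := by
  rw [radAvg_eq, radAvg_eq, ← mul_div_assoc]
  apply div_le_div_of_nonneg_right ?_ ?_ |>.trans_eq rfl
  · rw [Finset.mul_sum]
    apply Finset.sum_le_sum
    intro ε _
    have h1 : ∑ n, sgn (ε n) • B (x n) = B (∑ n, sgn (ε n) • x n) := by
      rw [map_sum]
      exact Finset.sum_congr rfl fun n _ => (B.map_smul _ _).symm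
    rw [h1]
    calc ‖B (∑ n, sgn (ε n) • x n)‖ ^ 2 ≤ (‖B‖ * ‖∑ n, sgn (ε n) • x n‖) ^ 2 := by
          apply pow_le_pow_left₀ (norm_nonneg _) (B.le_opNorm _)
      _ = ‖B‖ ^ 2 * ‖∑ n, sgn (ε n) • x n‖ ^ 2 := by ring
  · positivity

lemma sqrt_radAvg_map (B : E →L[ℝ] F) (x : Fin N → E) :
    Real.sqrt (radAvg (fun n => B (x n))) ≤ ‖B‖ * Real.sqrt (radAvg x) := by
  calc Real.sqrt (radAvg (fun n => B (x n))) ≤ Real.sqrt (‖B‖ ^ 2 * radAvg x) :=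
        Real.sqrt_le_sqrt (radAvg_map_le B x)
    _ = ‖B‖ * Real.sqrt (radAvg x) := by
        rw [Real.sqrt_mul (by positivity), Real.sqrt_sq (norm_nonneg _)]

lemma radAvg_smul (a : ℝ) (x : Fin N → E) :
    radAvg (fun n => a • x n) = a ^ 2 * radAvg x := by
  rw [radAvg_eq, radAvg_eq, ← mul_div_assoc]
  congr 1
  rw [Finset.mul_sum]
  refine Finset.sum_congr rfl fun ε _ => ?_
  have : ∑ n, sgn (ε n) • a • x n = a • ∑ n, sgn (ε n) • x n := by
    rw [Finset.smul_sum]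
    exact Finset.sum_congr rfl fun n _ => smul_comm _ _ _
  rw [this, norm_smul, mul_pow, Real.norm_eq_abs, sq_abs]

lemma sqrt_radAvg_ite (c : Fin N → Bool) (x : Fin N → E) :
    Real.sqrt (radAvg (fun n => if c n then x n else 0)) ≤ Real.sqrt (radAvg x) := by
  have key : (fun n => if c n then x n else 0)
      = fun n => (2⁻¹ : ℝ) • (x n + sgn (c n) • x n) := by
    funext n
    cases h : c n <;> simp [sgn, h]
    rw [← add_smul]; norm_num
  rw [key]
  calc Real.sqrt (radAvg fun n => (2⁻¹:ℝ) • (x n + sgn (c n) • x n))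
      = |(2⁻¹:ℝ)| * Real.sqrt (radAvg fun n => x n + sgn (c n) • x n) := by
        rw [radAvg_smul, Real.sqrt_mul (by positivity), Real.sqrt_sq_eq_abs]
    _ ≤ 2⁻¹ * (Real.sqrt (radAvg x) + Real.sqrt (radAvg fun n => sgn (c n) • x n)) := by
        rw [abs_of_nonneg (by norm_num : (0:ℝ) ≤ 2⁻¹)]
        exact mul_le_mul_of_nonneg_left (sqrt_radAvg_add _ _) (by norm_num)
    _ = Real.sqrt (radAvg x) := by rw [radAvg_flip]; ring

lemma sqrt_radAvg_ite' (P : Fin N → Prop) [DecidablePred P] (x : Fin N → E) :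
    Real.sqrt (radAvg (fun n => if P n then x n else 0)) ≤ Real.sqrt (radAvg x) := by
  have h : (fun n => if P n then x n else 0)
      = fun n => if (decide (P n) : Bool) then x n else 0 := by
    funext n; simp
  rw [h]
  exact sqrt_radAvg_ite _ x

lemma sqrt_radAvg_le_sum_norm (y : Fin N → E) :
    Real.sqrt (radAvg y) ≤ ∑ n, ‖y n‖ := by
  classical
  have hy : y = fun n => ∑ n' : Fin N, (if n = n' then y n' else 0) := by
    funext n
    rw [Finset.sum_ite_eq]
    simp
  calc Real.sqrt (radAvg y)
      = Real.sqrt (radAvg fun n => ∑ n' : Fin N, (if n = n' then y n' else 0)) := by rw [← hy]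
    _ ≤ ∑ n' : Fin N, Real.sqrt (radAvg fun n => if n = n' then y n' else 0) :=
        sqrt_radAvg_sum Finset.univ _
    _ = ∑ n', ‖y n'‖ := by
        refine Finset.sum_congr rfl fun n' _ => ?_
        have h1 : ∀ ε : Fin N → Bool,
            ∑ n, sgn (ε n) • (if n = n' then y n' else 0) = sgn (ε n') • y n' := by
          intro ε
          simp only [smul_ite, smul_zero]
          rw [Finset.sum_ite_eq']
          simp
        rw [radAvg_eq]
        have h2 : ∀ ε : Fin N → Bool,
            ‖∑ n, sgn (ε n) • (if n = n' then y n' else 0)‖ ^ 2 = ‖y n'‖ ^ 2 := by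
          intro ε
          rw [h1, norm_smul, Real.norm_eq_abs, abs_sgn, one_mul]
        rw [Finset.sum_congr rfl fun ε _ => h2 ε, Finset.sum_const, Finset.card_univ]
        simp only [Fintype.card_fun, Fintype.card_bool, Fintype.card_fin, nsmul_eq_mul,
          Nat.cast_pow, Nat.cast_ofNat]
        rw [mul_comm, mul_div_assoc, div_self (by positivity : ((2:ℝ)^N) ≠ 0), mul_one]
        exact Real.sqrt_sq (norm_nonneg _)

/-- Key randomization identity: grouping by fibers of `k`. -/
lemma radAvg_group (k : Fin N → Fin m) (y : Fin N → E) :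
    radAvg y = (∑ ε : Fin N → Bool,
      radAvg (fun i : Fin m => ∑ n ∈ Finset.univ.filter (fun n => k n = i), sgn (ε n) • y n))
        / 2 ^ N := by
  classical
  have expand : ∀ (ε : Fin N → Bool) (ε' : Fin m → Bool),
      ∑ i : Fin m, sgn (ε' i) • ∑ n ∈ Finset.univ.filter (fun n => k n = i), sgn (ε n) • y n
        = ∑ n, (sgn (ε n) * sgn (ε' (k n))) • y n := by
    intro ε ε'
    have h1 : ∀ i : Fin m,
        sgn (ε' i) • ∑ n ∈ Finset.univ.filter (fun n => k n = i), sgn (ε n) • y n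
          = ∑ n ∈ Finset.univ.filter (fun n => k n = i),
              (sgn (ε n) * sgn (ε' (k n))) • y n := by
      intro i
      rw [Finset.smul_sum]
      refine Finset.sum_congr rfl fun n hn => ?_
      rw [Finset.mem_filter] at hn
      rw [hn.2, smul_smul, mul_comm]
    rw [Finset.sum_congr rfl fun i _ => h1 i]
    exact Finset.sum_fiberwise_of_maps_to (fun n _ => Finset.mem_univ (k n)) _
  have swap : ∑ ε : Fin N → Bool, radAvg (fun i : Fin m =>
        ∑ n ∈ Finset.univ.filter (fun n => k n = i), sgn (ε n) • y n)
      = ∑ ε : Fin N → Bool, (∑ ε' : Fin m → Bool,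
          ‖∑ n, (sgn (ε n) * sgn (ε' (k n))) • y n‖ ^ 2) / 2 ^ m := by
    refine Finset.sum_congr rfl fun ε _ => ?_
    rw [radAvg_eq]
    congr 1
    exact Finset.sum_congr rfl fun ε' _ => by rw [expand ε ε']
  rw [swap, ← Finset.sum_div, Finset.sum_comm]
  have inner : ∀ ε' : Fin m → Bool,
      ∑ ε : Fin N → Bool, ‖∑ n, (sgn (ε n) * sgn (ε' (k n))) • y n‖ ^ 2
        = ∑ ε : Fin N → Bool, ‖∑ n, sgn (ε n) • y n‖ ^ 2 :=
    fun ε' => sum_flip (fun n => ε' (k n)) y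
  rw [Finset.sum_congr rfl fun ε' _ => inner ε', Finset.sum_const, Finset.card_univ]
  simp only [Fintype.card_fun, Fintype.card_bool, Fintype.card_fin, nsmul_eq_mul]
  rw [radAvg_eq, Nat.cast_pow]
  field_simp
  norm_num

end RadAux2

section MainAux
open RadAux RadAux2

variable {X : Type*} [NormedAddCommGroup X] [NormedSpace ℝ X]

lemma holder_step (p : ℝ) (q : ℝ≥0∞) (hp₁ : 1 ≤ p) (hp₂ : p ≤ 2) (hq : 2 ≤ q)
    {m : ℕ} (hm : 1 ≤ m) (a : Fin m → ℝ) (ha : ∀ i, 0 ≤ a i) :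
    (∑ i, a i ^ p) ^ (1/p)
      ≤ (m : ℝ) ^ (1/p - (1/q).toReal) *
        (if q = ∞ then ⨆ i, a i else (∑ i, a i ^ q.toReal) ^ (1/q.toReal)) := by
  have hp0 : 0 < p := lt_of_lt_of_le one_pos hp₁
  have hm0 : (0:ℝ) ≤ (m:ℝ) := Nat.cast_nonneg m
  by_cases hqi : q = ∞
  · simp only [hqi, if_pos]
    have hq0 : ((1 : ℝ≥0∞)/∞).toReal = 0 := by simp
    rw [hqi] at *
    rw [hq0, sub_zero]
    haveI : Nonempty (Fin m) := ⟨⟨0, hm⟩⟩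
    set s := ⨆ i, a i with hs
    have hb : ∀ i, a i ≤ s := fun i => le_ciSup (Set.Finite.bddAbove (Set.finite_range a)) i
    have hs0 : 0 ≤ s := le_trans (ha ⟨0, hm⟩) (hb ⟨0, hm⟩)
    have h1 : ∑ i, a i ^ p ≤ (m:ℝ) * s ^ p := by
      calc ∑ i, a i ^ p ≤ ∑ _i : Fin m, s ^ p :=
            Finset.sum_le_sum fun i _ => Real.rpow_le_rpow (ha i) (hb i) hp0.le
        _ = (m:ℝ) * s ^ p := by rw [Finset.sum_const]; simp [mul_comm]
    calc (∑ i, a i ^ p) ^ (1/p) ≤ ((m:ℝ) * s ^ p) ^ (1/p) :=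
          Real.rpow_le_rpow (Finset.sum_nonneg fun i _ => Real.rpow_nonneg (ha i) p) h1
            (by positivity)
      _ = (m:ℝ) ^ (1/p) * s := by
          rw [Real.mul_rpow hm0 (Real.rpow_nonneg hs0 p), ← Real.rpow_mul hs0,
            mul_one_div, div_self hp0.ne', Real.rpow_one]
  · simp only [hqi, if_neg, if_false]
    have hqtop : q ≠ ∞ := hqi
    set qr := q.toReal with hqr
    have hqr2 : (2:ℝ) ≤ qr := by
      have := ENNReal.toReal_mono hqtop hq
      simpa using this
    have hqr0 : 0 < qr := lt_of_lt_of_le two_pos hqr2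
    have hpq' : p ≤ qr := le_trans hp₂ hqr2
    have hβ : (1/q).toReal = 1/qr := by
      rw [one_div, one_div, ENNReal.toReal_inv]
    rw [hβ]
    set e := qr / p with he
    have he1 : 1 ≤ e := (one_le_div hp0).mpr hpq'
    have key : ∑ i, a i ^ p ≤ (m:ℝ) ^ (1 - e⁻¹) * (∑ i, a i ^ qr) ^ e⁻¹ := by
      have h := Real.inner_le_weight_mul_Lp_of_nonneg Finset.univ he1
        (fun _ : Fin m => (1:ℝ)) (fun i => a i ^ p) (fun _ => zero_le_one)
        (fun i => Real.rpow_nonneg (ha i) p)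
      simp only [one_mul] at h
      have hsum1 : ∑ _i : Fin m, (1:ℝ) = (m:ℝ) := by simp
      rw [hsum1] at h
      have hpow : ∀ i : Fin m, (a i ^ p) ^ e = a i ^ qr := by
        intro i
        rw [← Real.rpow_mul (ha i), he]
        congr 1
        field_simp
      calc ∑ i, a i ^ p ≤ (m:ℝ) ^ (1 - e⁻¹) * (∑ i, (a i ^ p) ^ e) ^ e⁻¹ := h
        _ = (m:ℝ) ^ (1 - e⁻¹) * (∑ i, a i ^ qr) ^ e⁻¹ := by
            rw [Finset.sum_congr rfl fun i _ => hpow i]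
    have hsq : (0:ℝ) ≤ ∑ i, a i ^ qr := Finset.sum_nonneg fun i _ => Real.rpow_nonneg (ha i) _
    have hse : (0:ℝ) ≤ (∑ i, a i ^ qr) ^ e⁻¹ := Real.rpow_nonneg hsq _
    calc (∑ i, a i ^ p) ^ (1/p)
        ≤ ((m:ℝ) ^ (1 - e⁻¹) * (∑ i, a i ^ qr) ^ e⁻¹) ^ (1/p) :=
          Real.rpow_le_rpow (Finset.sum_nonneg fun i _ => Real.rpow_nonneg (ha i) p) key
            (by positivity)
      _ = (m:ℝ) ^ (1/p - 1/qr) * (∑ i, a i ^ qr) ^ (1/qr) := by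
          have hmul : p / qr * (1/p) = 1/qr := by field_simp
          have hexp1 : (1 - e⁻¹) * (1/p) = 1/p - 1/qr := by
            rw [sub_mul, one_mul, he, inv_div, hmul]
          have hexp2 : e⁻¹ * (1/p) = 1/qr := by rw [he, inv_div, hmul]
          rw [Real.mul_rpow (Real.rpow_nonneg hm0 _) hse, ← Real.rpow_mul hm0,
            ← Real.rpow_mul hsq, hexp1, hexp2]


/-- R-bound for a finite family of operators with uniformly small norms, via type and cotype. -/
lemma lemmaC (p : ℝ) (q : ℝ≥0∞) (hp₁ : 1 ≤ p) (hp₂ : p ≤ 2) (hq : 2 ≤ q)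
    (Cp Cq : ℝ) (hCp0 : 0 ≤ Cp) (hCq0 : 0 ≤ Cq)
    (htype : ∀ (N : ℕ) (x : Fin N → X),
      Real.sqrt (radAvg x) ≤ Cp * (∑ n, ‖x n‖ ^ p) ^ (1 / p))
    (hcot : ∀ (N : ℕ) (x : Fin N → X),
      (if q = ∞ then ⨆ n, ‖x n‖ else (∑ n, ‖x n‖ ^ q.toReal) ^ (1 / q.toReal))
        ≤ Cq * Real.sqrt (radAvg x))
    {N m : ℕ} (hm : 1 ≤ m) (Λ : ℝ) (hΛ : 0 ≤ Λ)
    (U : Fin m → X →L[ℝ] X) (hU : ∀ i, ‖U i‖ ≤ Λ)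
    (k : Fin N → Fin m) (x : Fin N → X) :
    Real.sqrt (radAvg fun n => U (k n) (x n))
      ≤ (Cp * Cq * Λ * (m:ℝ) ^ (1/p - (1/q).toReal)) * Real.sqrt (radAvg x) := by
  classical
  have hp0 : 0 < p := lt_of_lt_of_le one_pos hp₁
  set β := 1/p - (1/q).toReal with hβ
  set c := Cp * Cq * Λ * (m:ℝ) ^ β with hc
  have hc0 : 0 ≤ c := by positivity
  set w : (Fin N → Bool) → Fin m → X :=
    fun ε i => ∑ n ∈ Finset.univ.filter (fun n => k n = i), sgn (ε n) • x n with hw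
  -- pointwise (in ε) estimate
  have pointwise : ∀ ε : Fin N → Bool,
      radAvg (fun i => U i (w ε i)) ≤ c ^ 2 * radAvg (w ε) := by
    intro ε
    have step : Real.sqrt (radAvg (fun i => U i (w ε i)))
        ≤ c * Real.sqrt (radAvg (w ε)) := by
      have h1 : Real.sqrt (radAvg (fun i => U i (w ε i)))
          ≤ Cp * (∑ i, ‖U i (w ε i)‖ ^ p) ^ (1/p) := htype m _
      have h2 : (∑ i, ‖U i (w ε i)‖ ^ p) ^ (1/p) ≤ Λ * (∑ i, ‖w ε i‖ ^ p) ^ (1/p) := by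
        have hbound : ∑ i, ‖U i (w ε i)‖ ^ p ≤ ∑ i, (Λ * ‖w ε i‖) ^ p := by
          refine Finset.sum_le_sum fun i _ => ?_
          refine Real.rpow_le_rpow (norm_nonneg _) ?_ hp0.le
          exact ((U i).le_opNorm _).trans
            (mul_le_mul_of_nonneg_right (hU i) (norm_nonneg _))
        calc (∑ i, ‖U i (w ε i)‖ ^ p) ^ (1/p) ≤ (∑ i, (Λ * ‖w ε i‖) ^ p) ^ (1/p) :=
              Real.rpow_le_rpow
                (Finset.sum_nonneg fun i _ => Real.rpow_nonneg (norm_nonneg _) _) hbound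
                (by positivity)
          _ = Λ * (∑ i, ‖w ε i‖ ^ p) ^ (1/p) := by
              have : ∀ i : Fin m, (Λ * ‖w ε i‖) ^ p = Λ ^ p * ‖w ε i‖ ^ p :=
                fun i => Real.mul_rpow hΛ (norm_nonneg _)
              rw [Finset.sum_congr rfl fun i _ => this i, ← Finset.mul_sum,
                Real.mul_rpow (Real.rpow_nonneg hΛ _)
                  (Finset.sum_nonneg fun i _ => Real.rpow_nonneg (norm_nonneg _) _),
                ← Real.rpow_mul hΛ, mul_one_div, div_self hp0.ne', Real.rpow_one]
      have h3 : (∑ i, ‖w ε i‖ ^ p) ^ (1/p)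
          ≤ (m:ℝ) ^ β *
            (if q = ∞ then ⨆ i, ‖w ε i‖ else (∑ i, ‖w ε i‖ ^ q.toReal) ^ (1/q.toReal)) :=
        holder_step p q hp₁ hp₂ hq hm _ (fun i => norm_nonneg _)
      have h4 : (if q = ∞ then ⨆ i, ‖w ε i‖ else (∑ i, ‖w ε i‖ ^ q.toReal) ^ (1/q.toReal))
          ≤ Cq * Real.sqrt (radAvg (w ε)) := hcot m (w ε)
      calc Real.sqrt (radAvg (fun i => U i (w ε i)))
          ≤ Cp * (∑ i, ‖U i (w ε i)‖ ^ p) ^ (1/p) := h1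
        _ ≤ Cp * (Λ * (∑ i, ‖w ε i‖ ^ p) ^ (1/p)) :=
            mul_le_mul_of_nonneg_left h2 hCp0
        _ ≤ Cp * (Λ * ((m:ℝ) ^ β *
              (if q = ∞ then ⨆ i, ‖w ε i‖
                else (∑ i, ‖w ε i‖ ^ q.toReal) ^ (1/q.toReal)))) := by
            refine mul_le_mul_of_nonneg_left (mul_le_mul_of_nonneg_left h3 hΛ) hCp0
        _ ≤ Cp * (Λ * ((m:ℝ) ^ β * (Cq * Real.sqrt (radAvg (w ε))))) := by
            refine mul_le_mul_of_nonneg_left (mul_le_mul_of_nonneg_left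
              (mul_le_mul_of_nonneg_left h4 (by positivity)) hΛ) hCp0
        _ = c * Real.sqrt (radAvg (w ε)) := by rw [hc]; ring
    calc radAvg (fun i => U i (w ε i))
        = Real.sqrt (radAvg (fun i => U i (w ε i))) ^ 2 :=
          (Real.sq_sqrt (radAvg_nonneg _)).symm
      _ ≤ (c * Real.sqrt (radAvg (w ε))) ^ 2 :=
          pow_le_pow_left₀ (Real.sqrt_nonneg _) step 2
      _ = c ^ 2 * Real.sqrt (radAvg (w ε)) ^ 2 := by ring
      _ = c ^ 2 * radAvg (w ε) := by rw [Real.sq_sqrt (radAvg_nonneg _)]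
  -- assemble via the grouping identity
  have hgroup1 : radAvg (fun n => U (k n) (x n))
      = (∑ ε : Fin N → Bool, radAvg (fun i => U i (w ε i))) / 2 ^ N := by
    rw [radAvg_group k (fun n => U (k n) (x n))]
    congr 1
    refine Finset.sum_congr rfl fun ε _ => ?_
    congr 1
    funext i
    rw [hw]
    simp only
    rw [map_sum]
    refine Finset.sum_congr rfl fun n hn => ?_
    rw [Finset.mem_filter] at hn
    rw [← hn.2, (U (k n)).map_smul]
  have hgroup2 : radAvg x = (∑ ε : Fin N → Bool, radAvg (w ε)) / 2 ^ N :=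
    radAvg_group k x
  have hfinal : radAvg (fun n => U (k n) (x n)) ≤ c ^ 2 * radAvg x := by
    rw [hgroup1, hgroup2, ← mul_div_assoc, Finset.mul_sum]
    apply div_le_div_of_nonneg_right ?_ ?_ |>.trans_eq rfl
    · exact Finset.sum_le_sum fun ε _ => pointwise ε
    · positivity
  calc Real.sqrt (radAvg fun n => U (k n) (x n)) ≤ Real.sqrt (c ^ 2 * radAvg x) :=
        Real.sqrt_le_sqrt hfinal
    _ = c * Real.sqrt (radAvg x) := by
        rw [Real.sqrt_mul (by positivity), Real.sqrt_sq hc0]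

/-- grouping a family of operators and summing their norms -/
lemma lemmaE {N : ℕ} (g : Fin N → ℕ) (J : ℕ) (hg : ∀ n, g n < J)
    (V : ℕ → X →L[ℝ] X) (y : Fin N → X) :
    Real.sqrt (radAvg fun n => V (g n) (y n))
      ≤ (∑ j ∈ Finset.range J, ‖V j‖) * Real.sqrt (radAvg y) := by
  classical
  have hdecomp : (fun n => V (g n) (y n))
      = fun n => ∑ j ∈ Finset.range J, (if g n = j then V j (y n) else 0) := by
    funext n
    rw [Finset.sum_ite_eq]
    simp [Finset.mem_range.mpr (hg n)]
  rw [hdecomp]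
  calc Real.sqrt (radAvg fun n => ∑ j ∈ Finset.range J, (if g n = j then V j (y n) else 0))
      ≤ ∑ j ∈ Finset.range J,
          Real.sqrt (radAvg fun n => if g n = j then V j (y n) else 0) :=
        sqrt_radAvg_sum _ _
    _ ≤ ∑ j ∈ Finset.range J, ‖V j‖ * Real.sqrt (radAvg y) := by
        refine Finset.sum_le_sum fun j _ => ?_
        have h1 : (fun n => if g n = j then V j (y n) else 0)
            = fun n => V j (if g n = j then y n else 0) := by
          funext n
          by_cases h : g n = j <;> simp [h]
        rw [h1]
        calc Real.sqrt (radAvg fun n => V j (if g n = j then y n else 0))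
            ≤ ‖V j‖ * Real.sqrt (radAvg fun n => if g n = j then y n else 0) :=
              sqrt_radAvg_map _ _
          _ ≤ ‖V j‖ * Real.sqrt (radAvg y) :=
              mul_le_mul_of_nonneg_left (sqrt_radAvg_ite' _ _) (norm_nonneg _)
    _ = (∑ j ∈ Finset.range J, ‖V j‖) * Real.sqrt (radAvg y) := by
        rw [Finset.sum_mul]

end MainAux

section MainProof
open RadAux RadAux2 Finset

set_option maxHeartbeats 2000000 in
/-- Theorem 6.1: let `X` have type `p` and cotype `q` with `1/p - 1/q < 1`, and let
`(T(t))_{t ≥ 0}` be a strongly continuous semigroup on `X` with `‖T(t)‖ ≤ M e^{-ωt}`, `ω > 0`.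
If `ι : Z → X` is a bounded operator and `α ∈ (1/p - 1/q, 1)` is such that
`‖T(t)∘ι - ι‖ ≤ K t^α` for `t > 0`, then `{T(t)∘ι : t ≥ 0} ⊆ B(Z,X)` is `R`-bounded. -/
theorem statement18 {X Z : Type*} [NormedAddCommGroup X] [NormedSpace ℝ X] [CompleteSpace X]
    [NormedAddCommGroup Z] [NormedSpace ℝ Z] [CompleteSpace Z]
    (p : ℝ) (q : ℝ≥0∞) (hp₁ : 1 ≤ p) (hp₂ : p ≤ 2) (hq : 2 ≤ q)
    (hXtype : HasRademacherType X p) (hXcotype : HasRademacherCotype X q)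
    (hpq : 1 / p - (1 / q).toReal < 1)
    (T : ℝ → X →L[ℝ] X) (M ω : ℝ) (hM : 1 ≤ M) (hω : 0 < ω)
    (hid : T 0 = ContinuousLinearMap.id ℝ X)
    (hsemigroup : ∀ s t : ℝ, 0 ≤ s → 0 ≤ t → T (s + t) = (T s).comp (T t))
    (hcont : ∀ x : X, ContinuousOn (fun t => T t x) (Set.Ici (0 : ℝ)))
    (hbdd : ∀ t : ℝ, 0 ≤ t → ‖T t‖ ≤ M * Real.exp (-ω * t))
    (ι : Z →L[ℝ] X) (α K : ℝ) (hα₁ : 1 / p - (1 / q).toReal < α) (hα₂ : α < 1)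
    (hK : ∀ t : ℝ, 0 < t → ‖(T t).comp ι - ι‖ ≤ K * t ^ α) :
    ∃ C : ℝ, 0 ≤ C ∧ ∀ (N : ℕ) (t : Fin N → ℝ) (z : Fin N → Z), (∀ n, 0 ≤ t n) →
      Real.sqrt (radAvg fun n => T (t n) (ι (z n))) ≤ C * Real.sqrt (radAvg z) := by
  classical
  obtain ⟨Cp, hCp0, htype⟩ := hXtype
  obtain ⟨Cq, hCq0, hcot⟩ := hXcotype
  have hp0 : 0 < p := lt_of_lt_of_le one_pos hp₁
  have hM0 : (0:ℝ) < M := lt_of_lt_of_le one_pos hM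
  set β : ℝ := 1/p - (1/q).toReal with hβ
  have hβ0 : 0 ≤ β := by
    have h1 : (1/q).toReal ≤ 1/2 := by
      rw [one_div, ENNReal.toReal_inv]
      by_cases hqt : q = ∞
      · simp [hqt]
      · have h2q : (2:ℝ) ≤ q.toReal := by simpa using ENNReal.toReal_mono hqt hq
        calc (q.toReal)⁻¹ ≤ (2:ℝ)⁻¹ := by
              apply inv_anti₀ two_pos h2q
          _ = 1/2 := by norm_num
    have h2 : (1/2 : ℝ) ≤ 1/p := by
      rw [div_le_div_iff₀ (by norm_num) hp0]
      linarith
    rw [hβ]; linarith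
  have hα0 : 0 < α := lt_of_le_of_lt hβ0 hα₁
  have hKnn : 0 ≤ K := by
    have h := hK 1 one_pos
    have : (1:ℝ) ^ α = 1 := Real.one_rpow α
    rw [this, mul_one] at h
    exact le_trans (norm_nonneg _) h
  set e : ℝ := Real.exp (-ω) with he
  have he0 : 0 < e := Real.exp_pos _
  have he1 : e < 1 := by
    rw [he]
    apply Real.exp_lt_one_iff.mpr
    linarith
  -- geometric sums
  have geom : ∀ (x : ℝ), 0 ≤ x → x < 1 → ∀ n : ℕ, ∑ i ∈ range n, x^i ≤ (1-x)⁻¹ := by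
    intro x hx0 hx1 n
    have hx : x ≠ 1 := ne_of_lt hx1
    have h1x : (0:ℝ) < 1 - x := by linarith
    rw [geom_sum_eq hx]
    have heq : (x ^ n - 1)/(x - 1) = (1 - x^n)/(1-x) := by
      rw [div_eq_div_iff (by intro h; apply hx; linarith) (ne_of_gt h1x)]
      ring
    rw [heq, div_le_iff₀ h1x, inv_mul_cancel₀ (ne_of_gt h1x)]
    have := pow_nonneg hx0 n
    linarith
  -- powers of two
  have hpowpow : ∀ (γ : ℝ) (mm : ℕ), ((2:ℝ)^mm) ^ γ = ((2:ℝ)^γ)^mm := by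
    intro γ mm
    rw [← Real.rpow_natCast 2 mm, ← Real.rpow_mul (by norm_num : (0:ℝ) ≤ 2), mul_comm,
      Real.rpow_mul (by norm_num : (0:ℝ) ≤ 2), Real.rpow_natCast]
  set u : ℝ := ((2:ℝ) ^ α)⁻¹ with hu
  have hu0 : 0 < u := by
    rw [hu]
    exact inv_pos.mpr (Real.rpow_pos_of_pos two_pos α)
  have hu1 : u < 1 := by
    rw [hu]
    rw [inv_lt_one_iff₀]
    right
    exact Real.one_lt_rpow_iff_of_pos two_pos |>.mpr (Or.inl ⟨one_lt_two, hα0⟩)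
  set r : ℝ := ((2:ℝ) ^ β) * u with hr
  have hr0 : 0 < r := mul_pos (Real.rpow_pos_of_pos two_pos β) hu0
  have hr1 : r < 1 := by
    rw [hr, hu, ← div_eq_mul_inv, div_lt_one (Real.rpow_pos_of_pos two_pos α)]
    exact (Real.rpow_lt_rpow_left_iff one_lt_two).mpr hα₁
  set C : ℝ := (M * (1-e)⁻¹) * ‖ι‖
      + (M * (1-e)⁻¹ * (Cp * Cq * M) * K * u) * (1-r)⁻¹ with hC
  have hC0 : 0 ≤ C := by
    have h1 : (0:ℝ) < 1 - e := by linarith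
    have h2 : (0:ℝ) < 1 - r := by linarith
    rw [hC]
    positivity
  refine ⟨C, hC0, ?_⟩
  intro N t z ht
  set ρ := Real.sqrt (radAvg z) with hρ
  have hρ0 : 0 ≤ ρ := Real.sqrt_nonneg _
  -- dyadic approximations
  set f : ℕ → Fin N → ℕ := fun m n => ⌊(2:ℝ)^m * t n⌋₊ with hf
  set σ : ℕ → Fin N → ℝ := fun m n => (f m n : ℝ) / 2^m with hσ
  have h2m : ∀ m : ℕ, (0:ℝ) < 2^m := fun m => by positivity
  have hf_le : ∀ m n, (f m n : ℝ) ≤ 2^m * t n := by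
    intro m n
    exact Nat.floor_le (by have := ht n; positivity)
  have hf_gt : ∀ m n, 2^m * t n < (f m n : ℝ) + 1 := by
    intro m n
    have h := Nat.lt_floor_add_one ((2:ℝ)^m * t n)
    rw [hf]
    exact_mod_cast h
  have hσ0 : ∀ m n, 0 ≤ σ m n := by
    intro m n
    exact div_nonneg (Nat.cast_nonneg _) (h2m m).le
  have hσ_le : ∀ m n, σ m n ≤ t n := by
    intro m n
    rw [hσ]
    simp only
    rw [div_le_iff₀ (h2m m), mul_comm]
    exact hf_le m n
  have hσ_gt : ∀ m n, t n - ((2:ℝ)^m)⁻¹ < σ m n := by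
    intro m n
    rw [hσ]
    simp only
    rw [lt_div_iff₀ (h2m m), sub_mul, inv_mul_cancel₀ (h2m m).ne']
    have := hf_gt m n
    linarith [mul_comm (t n) ((2:ℝ)^m)]
  -- the two-scale dichotomy
  have hsplit : ∀ m n, f (m+1) n = 2 * f m n ∨ f (m+1) n = 2 * f m n + 1 := by
    intro m n
    have low : 2 * f m n ≤ f (m+1) n := by
      apply Nat.le_floor
      push_cast
      calc ((2:ℝ) * f m n) ≤ 2 * (2^m * t n) := by
            have := hf_le m n; linarith
        _ = 2^(m+1) * t n := by ring
    have high : f (m+1) n < 2 * f m n + 2 := by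
      rw [hf]
      simp only
      apply Nat.floor_lt (by have := ht n; positivity) |>.mpr
      push_cast
      calc (2:ℝ)^(m+1) * t n = 2 * (2^m * t n) := by ring
        _ < 2 * ((f m n : ℝ) + 1) := by have := hf_gt m n; linarith
        _ = 2 * (f m n : ℝ) + 2 := by ring
    omega
  -- integer parts
  set j : Fin N → ℕ := fun n => f 0 n with hj
  have hj_eq : ∀ n, σ 0 n = (j n : ℝ) := by
    intro n; rw [hσ, hj]; simp
  have hjf : ∀ m n, 2^m * j n ≤ f m n := by
    intro m n
    apply Nat.le_floor
    push_cast
    have h1 : (j n : ℝ) ≤ t n := by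
      have := hσ_le 0 n
      rw [hj_eq n] at this
      exact this
    calc ((2:ℝ)^m * j n) ≤ 2^m * t n := by
          apply mul_le_mul_of_nonneg_left h1 (h2m m).le
      _ = 2^m * t n := rfl
  have hfj : ∀ m n, f m n < 2^m * j n + 2^m := by
    intro m n
    rw [hf]
    simp only
    apply Nat.floor_lt (by have := ht n; positivity) |>.mpr
    push_cast
    have h1 : t n < (j n : ℝ) + 1 := by
      have := hσ_gt 0 n
      rw [hj_eq n] at this
      simp at this
      linarith
    calc (2:ℝ)^m * t n < 2^m * ((j n : ℝ) + 1) := by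
          apply mul_lt_mul_of_pos_left h1 (h2m m)
      _ = 2^m * (j n:ℝ) + 2^m := by ring
  set kk : ℕ → Fin N → ℕ := fun m n => f m n - 2^m * j n with hkk
  have hkk_lt : ∀ m n, kk m n < 2^m := by
    intro m n
    have h1 := hjf m n
    have h2 := hfj m n
    show f m n - 2^m * j n < 2^m
    omega
  set b : ℕ → Fin N → ℝ := fun m n => (kk m n : ℝ) / 2^m with hb
  have hb0 : ∀ m n, 0 ≤ b m n := fun m n => div_nonneg (Nat.cast_nonneg _) (h2m m).le
  have hσ_dec : ∀ m n, σ m n = (j n : ℝ) + b m n := by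
    intro m n
    show (f m n : ℝ) / 2^m = (j n : ℝ) + (kk m n : ℝ) / 2^m
    have hle := hjf m n
    rw [div_eq_iff (h2m m).ne', add_mul, div_mul_cancel₀ _ (h2m m).ne']
    rw [hkk]
    push_cast [Nat.cast_sub hle]
    ring
  have hδstep : ∀ m n, σ (m+1) n = σ m n ∨ σ (m+1) n = σ m n + ((2:ℝ)^(m+1))⁻¹ := by
    intro m n
    rcases hsplit m n with h | h
    · left
      rw [hσ]
      simp only
      rw [h]
      push_cast
      field_simp
      ring
    · right
      rw [hσ]
      simp only
      rw [h]
      push_cast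
      field_simp
      ring
  -- bound on sums of semigroup norms over integer grid
  have hsumT : ∀ J' : ℕ, ∑ jj ∈ range J', ‖T ((jj : ℕ) : ℝ)‖ ≤ M * (1-e)⁻¹ := by
    intro J'
    calc ∑ jj ∈ range J', ‖T ((jj : ℕ) : ℝ)‖ ≤ ∑ jj ∈ range J', M * e^jj := by
          refine Finset.sum_le_sum fun jj _ => ?_
          have h1 := hbdd (jj : ℝ) (Nat.cast_nonneg _)
          have h2 : Real.exp (-ω * (jj:ℝ)) = e ^ jj := by
            rw [he, ← Real.exp_nat_mul]
            congr 1
            ring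
          rw [h2] at h1
          exact h1
      _ = M * ∑ jj ∈ range J', e^jj := by rw [Finset.mul_sum]
      _ ≤ M * (1-e)⁻¹ := by
          apply mul_le_mul_of_nonneg_left (geom e he0.le he1 J') hM0.le
  -- smallness of the increment operators
  have hEm : ∀ m : ℕ, ‖(T (((2:ℝ)^(m+1))⁻¹)).comp ι - ι‖ ≤ K * u^(m+1) := by
    intro m
    have hpos : (0:ℝ) < ((2:ℝ)^(m+1))⁻¹ := inv_pos.mpr (h2m (m+1))
    have h1 := hK _ hpos
    have h2 : (((2:ℝ)^(m+1))⁻¹) ^ α = u^(m+1) := by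
      rw [Real.inv_rpow (h2m (m+1)).le, hpowpow α (m+1), ← inv_pow, hu]
    rw [h2] at h1
    exact h1
  have hinvpow : ∀ mm : ℕ, (((2:ℝ)^mm)⁻¹ : ℝ) ^ α = u ^ mm := by
    intro mm
    rw [Real.inv_rpow (h2m mm).le, hpowpow α mm, ← inv_pow, hu]
  set J : ℕ := Finset.univ.sup j + 1 with hJdef
  have hgJ : ∀ n, j n < J := by
    intro n
    rw [hJdef]
    exact Nat.lt_succ_of_le (Finset.le_sup (Finset.mem_univ n))
  -- the three pieces, for a given resolution m₀
  have main : ∀ m₀ : ℕ,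
      Real.sqrt (radAvg fun n => T (t n) (ι (z n)))
        ≤ C * ρ + (M * K * ∑ n, ‖z n‖) * u ^ m₀ := by
    intro m₀
    set base : Fin N → X := fun n => T (σ 0 n) (ι (z n)) with hbase_def
    set dd : ℕ → Fin N → X :=
      fun m n => T (σ (m+1) n) (ι (z n)) - T (σ m n) (ι (z n)) with hdd
    set mid : Fin N → X := fun n => ∑ m ∈ range m₀, dd m n with hmid
    set tail : Fin N → X := fun n => T (t n) (ι (z n)) - T (σ m₀ n) (ι (z n)) with htail
    have hdecomp : (fun n => T (t n) (ι (z n)))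
        = fun n => base n + (mid n + tail n) := by
      funext n
      rw [hbase_def, hmid, hdd, htail]
      simp only
      rw [Finset.sum_range_sub (fun m => T (σ m n) (ι (z n))) m₀]
      abel
    have hbase : Real.sqrt (radAvg base) ≤ (M * (1-e)⁻¹) * (‖ι‖ * ρ) := by
      have hb1 : base = fun n => T ((j n : ℕ) : ℝ) (ι (z n)) := by
        funext n
        rw [hbase_def]
        simp only
        rw [hj_eq n]
      rw [hb1]
      calc Real.sqrt (radAvg fun n => T ((j n : ℕ) : ℝ) (ι (z n)))
          ≤ (∑ jj ∈ range J, ‖T ((jj : ℕ) : ℝ)‖)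
              * Real.sqrt (radAvg fun n => ι (z n)) :=
            lemmaE j J hgJ (fun jj => T ((jj : ℕ) : ℝ)) (fun n => ι (z n))
        _ ≤ (M * (1-e)⁻¹) * (‖ι‖ * ρ) := by
            apply mul_le_mul (hsumT J) ?_ (Real.sqrt_nonneg _) ?_
            · exact sqrt_radAvg_map ι z
            · have h1 : (0:ℝ) < 1 - e := by linarith
              positivity
    have hlev : ∀ m, Real.sqrt (radAvg (dd m))
        ≤ ((M * (1-e)⁻¹) * (Cp * Cq * M) * K) * (u * r ^ m) * ρ := by
      intro m
      set hh : ℝ := ((2:ℝ)^(m+1))⁻¹ with hhh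
      have hh0 : 0 < hh := inv_pos.mpr (h2m (m+1))
      set Em : Z →L[ℝ] X := (T hh).comp ι - ι with hEmdef
      set xv : Fin N → X :=
        fun n => if f (m+1) n = 2 * f m n then (0:X) else Em (z n) with hxv
      set kidx : Fin N → Fin (2^m) := fun n => ⟨kk m n, hkk_lt m n⟩ with hkidx
      set U : Fin (2^m) → X →L[ℝ] X := fun i => T (((i:ℕ):ℝ)/2^m) with hU
      have hUkb : ∀ n, U (kidx n) = T (b m n) := by
        intro n
        rw [hU, hkidx, hb]
      have key : dd m = fun n => T ((j n : ℕ):ℝ) (U (kidx n) (xv n)) := by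
        funext n
        rw [hdd]
        simp only
        rcases hsplit m n with h | h
        · have hσeq : σ (m+1) n = σ m n := by
            rw [hσ]
            simp only
            rw [h]
            push_cast
            field_simp
            ring
          have hxv0 : xv n = 0 := by rw [hxv]; simp only; rw [if_pos h]
          rw [hσeq, sub_self, hxv0, map_zero, map_zero]
        · have hσeq : σ (m+1) n = σ m n + hh := by
            rw [hσ, hhh]
            simp only
            rw [h]
            push_cast
            field_simp
            ring
          have hne : ¬ (f (m+1) n = 2 * f m n) := by omega
          have hxv1 : xv n = T hh (ι (z n)) - ι (z n) := by
            rw [hxv]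
            simp only
            rw [if_neg hne, hEmdef]
            simp [ContinuousLinearMap.sub_apply, ContinuousLinearMap.comp_apply]
          rw [hσeq, hsemigroup (σ m n) hh (hσ0 m n) hh0.le]
          rw [hσ_dec m n, hsemigroup ((j n : ℕ):ℝ) (b m n) (Nat.cast_nonneg _) (hb0 m n)]
          rw [hUkb n, hxv1]
          simp only [ContinuousLinearMap.comp_apply]
          rw [← map_sub, ← map_sub]
      have hxvb : Real.sqrt (radAvg xv) ≤ (K * u^(m+1)) * ρ := by
        have hxv2 : xv = fun n => Em (if f (m+1) n = 2 * f m n then (0:Z) else z n) := by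
          funext n
          rw [hxv]
          by_cases hc : f (m+1) n = 2 * f m n <;> simp [hc]
        have hflip : (fun n => if f (m+1) n = 2 * f m n then (0:Z) else z n)
            = fun n => if ¬ (f (m+1) n = 2 * f m n) then z n else 0 := by
          funext n
          by_cases hc : f (m+1) n = 2 * f m n <;> simp [hc]
        calc Real.sqrt (radAvg xv)
            = Real.sqrt (radAvg fun n =>
                Em (if f (m+1) n = 2 * f m n then (0:Z) else z n)) := by rw [← hxv2]
          _ ≤ ‖Em‖ * Real.sqrt (radAvg fun n =>
                if f (m+1) n = 2 * f m n then (0:Z) else z n) := sqrt_radAvg_map _ _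
          _ ≤ ‖Em‖ * ρ := by
              apply mul_le_mul_of_nonneg_left _ (norm_nonneg _)
              rw [hflip, hρ]
              exact sqrt_radAvg_ite' _ _
          _ ≤ (K * u^(m+1)) * ρ := by
              apply mul_le_mul_of_nonneg_right _ hρ0
              rw [hEmdef, hhh]
              exact hEm m
      have hUb : ∀ i : Fin (2^m), ‖U i‖ ≤ M := by
        intro i
        have hnn : (0:ℝ) ≤ ((i:ℕ):ℝ)/2^m := by positivity
        calc ‖U i‖ ≤ M * Real.exp (-ω * (((i:ℕ):ℝ)/2^m)) := hbdd _ hnn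
          _ ≤ M * 1 := by
              apply mul_le_mul_of_nonneg_left _ hM0.le
              apply Real.exp_le_one_iff.mpr
              have h2 : 0 ≤ ω * (((i:ℕ):ℝ)/2^m) := mul_nonneg hω.le hnn
              linarith
          _ = M := mul_one M
      have hcast : (((2:ℕ)^m : ℕ):ℝ) ^ β = ((2:ℝ)^β)^m := by
        have h1 : (((2:ℕ)^m : ℕ):ℝ) = (2:ℝ)^m := by push_cast; ring
        rw [h1, hpowpow β m]
      calc Real.sqrt (radAvg (dd m))
          = Real.sqrt (radAvg fun n => T ((j n : ℕ):ℝ) (U (kidx n) (xv n))) := by rw [key]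
        _ ≤ (∑ jj ∈ range J, ‖T ((jj : ℕ) : ℝ)‖)
              * Real.sqrt (radAvg fun n => U (kidx n) (xv n)) :=
            lemmaE j J hgJ (fun jj => T ((jj : ℕ) : ℝ)) _
        _ ≤ (M * (1-e)⁻¹) * ((Cp * Cq * M * (((2:ℕ)^m : ℕ):ℝ) ^ β) * ((K * u^(m+1)) * ρ)) := by
            apply mul_le_mul (hsumT J) ?_ (Real.sqrt_nonneg _) ?_
            · calc Real.sqrt (radAvg fun n => U (kidx n) (xv n))
                  ≤ (Cp * Cq * M * (((2:ℕ)^m : ℕ):ℝ) ^ (1/p - (1/q).toReal))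
                      * Real.sqrt (radAvg xv) :=
                    lemmaC p q hp₁ hp₂ hq Cp Cq hCp0 hCq0 htype hcot
                      Nat.one_le_two_pow M hM0.le U hUb kidx xv
                _ ≤ (Cp * Cq * M * (((2:ℕ)^m : ℕ):ℝ) ^ β) * ((K * u^(m+1)) * ρ) := by
                    rw [hβ]
                    apply mul_le_mul_of_nonneg_left hxvb
                    positivity
            · have h1 : (0:ℝ) < 1 - e := by linarith
              positivity
        _ = ((M * (1-e)⁻¹) * (Cp * Cq * M) * K) * (u * r ^ m) * ρ := by
            rw [hcast, hr, mul_pow]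
            ring
    have htailb : Real.sqrt (radAvg tail) ≤ (M * K * ∑ n, ‖z n‖) * u ^ m₀ := by
      have hn : ∀ n, ‖tail n‖ ≤ M * K * u ^ m₀ * ‖z n‖ := by
        intro n
        by_cases hcase : σ m₀ n = t n
        · have : tail n = 0 := by
            rw [htail]
            simp only
            rw [hcase, sub_self]
          rw [this, norm_zero]
          have := norm_nonneg (z n)
          positivity
        · have hlt : σ m₀ n < t n := lt_of_le_of_ne (hσ_le m₀ n) hcase
          set d : ℝ := t n - σ m₀ n with hd
          have hd0 : 0 < d := by rw [hd]; linarith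
          have hdle : d ≤ ((2:ℝ)^m₀)⁻¹ := by
            have := hσ_gt m₀ n
            rw [hd]
            linarith
          have hsum : σ m₀ n + d = t n := by rw [hd]; ring
          have htn : tail n = T (σ m₀ n) (((T d).comp ι - ι) (z n)) := by
            rw [htail]
            simp only
            rw [← hsum, hsemigroup (σ m₀ n) d (hσ0 m₀ n) hd0.le]
            simp only [ContinuousLinearMap.coe_comp', Function.comp_apply,
              ContinuousLinearMap.coe_sub', Pi.sub_apply, ContinuousLinearMap.coe_comp']
            rw [← map_sub]
          rw [htn]
          calc ‖T (σ m₀ n) (((T d).comp ι - ι) (z n))‖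
              ≤ ‖T (σ m₀ n)‖ * ‖((T d).comp ι - ι) (z n)‖ :=
                ContinuousLinearMap.le_opNorm _ _
            _ ≤ M * (K * u ^ m₀ * ‖z n‖) := by
                apply mul_le_mul
                · calc ‖T (σ m₀ n)‖ ≤ M * Real.exp (-ω * σ m₀ n) := hbdd _ (hσ0 m₀ n)
                    _ ≤ M * 1 := by
                        apply mul_le_mul_of_nonneg_left _ hM0.le
                        apply Real.exp_le_one_iff.mpr
                        have h1 := hσ0 m₀ n
                        have h2 : 0 ≤ ω * σ m₀ n := mul_nonneg hω.le h1
                        linarith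
                    _ = M := mul_one M
                · calc ‖((T d).comp ι - ι) (z n)‖
                      ≤ ‖(T d).comp ι - ι‖ * ‖z n‖ := ContinuousLinearMap.le_opNorm _ _
                    _ ≤ (K * u ^ m₀) * ‖z n‖ := by
                        apply mul_le_mul_of_nonneg_right _ (norm_nonneg _)
                        calc ‖(T d).comp ι - ι‖ ≤ K * d ^ α := hK d hd0
                          _ ≤ K * u ^ m₀ := by
                              apply mul_le_mul_of_nonneg_left _ hKnn
                              rw [← hinvpow m₀]
                              exact Real.rpow_le_rpow hd0.le hdle hα0.le
                    _ = K * u ^ m₀ * ‖z n‖ := rfl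
                · positivity
                · exact hM0.le
            _ = M * K * u ^ m₀ * ‖z n‖ := by ring
      calc Real.sqrt (radAvg tail) ≤ ∑ n, ‖tail n‖ := sqrt_radAvg_le_sum_norm tail
        _ ≤ ∑ n, M * K * u ^ m₀ * ‖z n‖ := Finset.sum_le_sum fun n _ => hn n
        _ = (M * K * ∑ n, ‖z n‖) * u ^ m₀ := by
            rw [← Finset.mul_sum]
            ring
    calc Real.sqrt (radAvg fun n => T (t n) (ι (z n)))
        = Real.sqrt (radAvg fun n => base n + (mid n + tail n)) := by rw [← hdecomp]
      _ ≤ Real.sqrt (radAvg base)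
            + Real.sqrt (radAvg fun n => mid n + tail n) := sqrt_radAvg_add _ _
      _ ≤ Real.sqrt (radAvg base)
            + (Real.sqrt (radAvg mid) + Real.sqrt (radAvg tail)) := by
          have := sqrt_radAvg_add mid tail
          linarith
      _ ≤ (M * (1-e)⁻¹) * (‖ι‖ * ρ)
            + (((M * (1-e)⁻¹) * (Cp * Cq * M) * K) * u * (1-r)⁻¹ * ρ
              + (M * K * ∑ n, ‖z n‖) * u ^ m₀) := by
          have hmidb : Real.sqrt (radAvg mid)
              ≤ ((M * (1-e)⁻¹) * (Cp * Cq * M) * K) * u * (1-r)⁻¹ * ρ := by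
            calc Real.sqrt (radAvg mid)
                ≤ ∑ m ∈ range m₀, Real.sqrt (radAvg (dd m)) := by
                  rw [hmid]
                  exact sqrt_radAvg_sum _ _
              _ ≤ ∑ m ∈ range m₀,
                    ((M * (1-e)⁻¹) * (Cp * Cq * M) * K) * (u * r ^ m) * ρ :=
                  Finset.sum_le_sum fun m _ => hlev m
              _ = ((M * (1-e)⁻¹) * (Cp * Cq * M) * K) * u
                    * (∑ m ∈ range m₀, r ^ m) * ρ := by
                  have heach : ∀ m : ℕ,
                      ((M * (1-e)⁻¹) * (Cp * Cq * M) * K) * (u * r ^ m) * ρ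
                        = (((M * (1-e)⁻¹) * (Cp * Cq * M) * K) * u * ρ) * r ^ m :=
                    fun m => by ring
                  rw [Finset.sum_congr rfl fun m _ => heach m, ← Finset.mul_sum]
                  ring
              _ ≤ ((M * (1-e)⁻¹) * (Cp * Cq * M) * K) * u * (1-r)⁻¹ * ρ := by
                  have h1 : (0:ℝ) ≤ ((M * (1-e)⁻¹) * (Cp * Cq * M) * K) * u := by
                    have : (0:ℝ) < 1 - e := by linarith
                    positivity
                  have h2 := geom r hr0.le hr1 m₀
                  have h3 : (0:ℝ) ≤ ρ := hρ0
                  exact mul_le_mul_of_nonneg_right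
                    (mul_le_mul_of_nonneg_left h2 h1) h3
          linarith [hbase, htailb]
      _ = C * ρ + (M * K * ∑ n, ‖z n‖) * u ^ m₀ := by
          rw [hC]
          ring
  -- pass to the limit in m₀
  have hulim : Filter.Tendsto (fun m₀ : ℕ => C * ρ + (M * K * ∑ n, ‖z n‖) * u ^ m₀)
      Filter.atTop (nhds (C * ρ)) := by
    have h1 : Filter.Tendsto (fun m₀ : ℕ => u ^ m₀) Filter.atTop (nhds 0) :=
      tendsto_pow_atTop_nhds_zero_of_lt_one hu0.le hu1
    have h2 := (h1.const_mul (M * K * ∑ n, ‖z n‖)).const_add (C * ρ)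
    simpa using h2
  exact ge_of_tendsto hulim (Filter.Eventually.of_forall main)

end MainProof
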